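/- arXiv:1205.3574 — 4 statements merged into one kernel-verified Lean document; each statement's English description precedes it below -/
import Mathlib

section
/- Let X be a normed vector space, h ≥ 2, and E = span(u_1,…,u_h) an h-dimensional subspace. Suppose for each 1 ≤ i ≤ h there is a sequence (v_i^n)_n in X with ‖v_i^n − u_i‖ ≤ 1/n, and set F_n = span(v_1^n,…,v_h^n). Then sup_{z ∈ F_n, ‖z‖=1} inf_{x ∈ E, ‖x‖=1} ‖x − z‖ → 0 as n → ∞. -/
open Filter

/-- If `E = span(u_1,…,u_h)` is `h`-dimensional in a normed space and
`v_i^n` satisfy `‖v_i^n - u_i‖ ≤ 1/n`, with `F_n = span(v_1^n,…,v_h^n)`, then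
`sup_{z ∈ F_n, ‖z‖=1} inf_{x ∈ E, ‖x‖=1} ‖x - z‖ → 0`. -/
theorem stmt2 {𝕜 : Type*} [RCLike 𝕜] {X : Type*} [NormedAddCommGroup X]
    [NormedSpace 𝕜 X] (h : ℕ) (hh : 2 ≤ h)
    (u : Fin h → X) (hu : LinearIndependent 𝕜 u)
    (v : ℕ → Fin h → X)
    (hv : ∀ n : ℕ, 1 ≤ n → ∀ i, ‖v n i - u i‖ ≤ 1 / (n : ℝ)) :
    Tendsto (fun n : ℕ =>
        ⨆ z : {z : X // z ∈ Submodule.span 𝕜 (Set.range (v n)) ∧ ‖z‖ = 1},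
          ⨅ x : {x : X // x ∈ Submodule.span 𝕜 (Set.range u) ∧ ‖x‖ = 1},
            ‖(x : X) - (z : X)‖) atTop (nhds 0) := by
  classical
  obtain ⟨C, hC0, hC⟩ : ∃ C : ℝ, 0 < C ∧
      ∀ c : Fin h → 𝕜, ∑ i, ‖c i‖ ≤ C * ‖∑ i, c i • u i‖ := by
    haveI : FiniteDimensional 𝕜 (Submodule.span 𝕜 (Set.range u)) :=
      FiniteDimensional.span_of_finite 𝕜 (Set.finite_range u)
    set b : Module.Basis (Fin h) 𝕜 (Submodule.span 𝕜 (Set.range u)) := Module.Basis.span hu with hb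
    let T := (b.equivFunL :
      Submodule.span 𝕜 (Set.range u) ≃L[𝕜] (Fin h → 𝕜)).toContinuousLinearMap
    refine ⟨h * ‖T‖ + 1, by positivity, fun c => ?_⟩
    set x : Submodule.span 𝕜 (Set.range u) := ∑ i, c i • b i with hxdef
    have hx : (x : X) = ∑ i, c i • u i := by
      simp [hxdef, hb, Module.Basis.span_apply]
    have hTx : T x = c := by
      have hxe : x = b.equivFun.symm c := by rw [b.equivFun_symm_apply]
      rw [hxe]
      exact b.equivFun.apply_symm_apply c
    have h1 : ∑ i, ‖c i‖ ≤ (h : ℝ) * ‖c‖ :=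
      calc ∑ i, ‖c i‖ ≤ ∑ _i : Fin h, ‖c‖ :=
            Finset.sum_le_sum fun i _ => norm_le_pi_norm c i
        _ = (h : ℝ) * ‖c‖ := by simp [Finset.sum_const, mul_comm]
    have h2 : ‖c‖ ≤ ‖T‖ * ‖x‖ := by rw [← hTx]; exact T.le_opNorm x
    have h3 : ‖x‖ = ‖∑ i, c i • u i‖ := by rw [← hx]; rfl
    have h4 : (0:ℝ) ≤ ‖T‖ := ContinuousLinearMap.opNorm_nonneg T
    have h5 : (0:ℝ) ≤ ‖∑ i, c i • u i‖ := norm_nonneg _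
    have h6 : (0:ℝ) ≤ (h:ℝ) := Nat.cast_nonneg h
    calc ∑ i, ‖c i‖ ≤ (h : ℝ) * ‖c‖ := h1
      _ ≤ (h : ℝ) * (‖T‖ * ‖x‖) := by nlinarith
      _ = ((h : ℝ) * ‖T‖) * ‖∑ i, c i • u i‖ := by rw [h3]; ring
      _ ≤ ((h : ℝ) * ‖T‖ + 1) * ‖∑ i, c i • u i‖ := by nlinarith
  apply squeeze_zero' (g := fun n : ℕ => 4 * C / n)
  · exact Eventually.of_forall fun n =>
      Real.iSup_nonneg fun z => Real.iInf_nonneg fun x => norm_nonneg _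
  · filter_upwards [eventually_ge_atTop 1, eventually_ge_atTop ⌈4 * C⌉₊] with n hn1 hn2
    have hn0 : (0:ℝ) < n := by exact_mod_cast hn1
    have hn4C : 4 * C ≤ (n : ℝ) := le_trans (Nat.le_ceil _) (by exact_mod_cast hn2)
    refine Real.iSup_le ?_ (div_nonneg (by positivity) hn0.le)
    rintro ⟨z, hz, hz1⟩
    obtain ⟨c, hc⟩ := (Submodule.mem_span_range_iff_exists_fun 𝕜).mp hz
    set w : X := ∑ i, c i • u i with hw
    set S : ℝ := ∑ i, ‖c i‖ with hSdef
    have hS0 : 0 ≤ S := Finset.sum_nonneg fun i _ => norm_nonneg _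
    have hSw : S ≤ C * ‖w‖ := hC c
    have hzw : ‖z - w‖ ≤ S / n := by
      have heq : z - w = ∑ i, c i • (v n i - u i) := by
        rw [← hc, hw]
        simp [smul_sub, Finset.sum_sub_distrib]
      calc ‖z - w‖ ≤ ∑ i, ‖c i • (v n i - u i)‖ := by
            rw [heq]; exact norm_sum_le _ _
        _ ≤ ∑ i, ‖c i‖ * (1 / n) := Finset.sum_le_sum fun i _ => by
            rw [norm_smul]
            exact mul_le_mul_of_nonneg_left (hv n hn1 i) (norm_nonneg _)
        _ = S / n := by rw [← Finset.sum_mul]; field_simp; rfl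
    have hwle : ‖w‖ ≤ 1 + S / n := by
      calc ‖w‖ = ‖z - (z - w)‖ := by rw [sub_sub_cancel]
        _ ≤ ‖z‖ + ‖z - w‖ := norm_sub_le _ _
        _ ≤ 1 + S / n := by rw [hz1]; linarith
    have hCn : C / n ≤ 1 / 4 := by
      rw [div_le_div_iff₀ hn0 (by norm_num)]
      linarith
    have hS2C : S ≤ 2 * C := by
      have hmul : C * (S / n) = (C / n) * S := by ring
      have h7 : (C / n) * S ≤ (1/4) * S := mul_le_mul_of_nonneg_right hCn hS0
      nlinarith
    have hzw2 : ‖z - w‖ ≤ 2 * C / n := by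
      calc ‖z - w‖ ≤ S / n := hzw
        _ ≤ 2 * C / n := by gcongr
    have hw_pos : (1:ℝ)/2 ≤ ‖w‖ := by
      have hnn := norm_sub_norm_le z w
      have h2Cn : 2 * C / n ≤ 1 / 2 := by
        rw [div_le_div_iff₀ hn0 (by norm_num)]
        linarith
      rw [hz1] at hnn
      linarith
    have hw_ne : ‖w‖ ≠ 0 := by linarith
    set x : X := ((‖w‖ : 𝕜))⁻¹ • w with hxd
    have hxE : x ∈ Submodule.span 𝕜 (Set.range u) :=
      Submodule.smul_mem _ _ (Submodule.sum_mem _ fun i _ =>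
        Submodule.smul_mem _ _ (Submodule.subset_span (Set.mem_range_self i)))
    have hx1 : ‖x‖ = 1 := by
      rw [hxd, norm_smul, norm_inv, RCLike.norm_ofReal, abs_of_pos (by linarith),
        inv_mul_cancel₀ hw_ne]
    have hxw : ‖x - w‖ ≤ ‖z - w‖ := by
      have heq : x - w = (((‖w‖ : 𝕜))⁻¹ - 1) • w := by
        rw [sub_smul, one_smul, hxd]
      have hcast : ((‖w‖ : 𝕜))⁻¹ - 1 = ((‖w‖⁻¹ - 1 : ℝ) : 𝕜) := by push_cast; ring
      have : ‖x - w‖ = |‖w‖⁻¹ - 1| * ‖w‖ := by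
        rw [heq, norm_smul, hcast, RCLike.norm_ofReal]
      rw [this]
      have : |‖w‖⁻¹ - 1| * ‖w‖ = |1 - ‖w‖| := by
        rw [← abs_of_pos (show (0:ℝ) < ‖w‖ by linarith), ← abs_mul]
        rw [abs_of_pos (show (0:ℝ) < ‖w‖ by linarith)]
        rw [show (‖w‖⁻¹ - 1) * ‖w‖ = 1 - ‖w‖ by field_simp]
      rw [this, ← hz1]
      exact abs_norm_sub_norm_le z w
    have hxz : ‖x - z‖ ≤ 4 * C / n := by
      have h1 : ‖x - z‖ ≤ ‖x - w‖ + ‖w - z‖ := by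
        rw [← sub_add_sub_cancel x w z]; exact norm_add_le _ _
      have h2 : ‖w - z‖ = ‖z - w‖ := norm_sub_rev _ _
      have h3 : 2 * C / (n:ℝ) + 2 * C / n = 4 * C / n := by ring
      linarith
    exact ciInf_le_of_le
      ⟨0, by rintro r ⟨y, rfl⟩; exact norm_nonneg _⟩ ⟨x, hxE, hx1⟩ hxz
  · exact tendsto_const_div_atTop_nhds_zero_nat (4 * C)
end

section
/- Let X be a separable Banach space and T ∈ L(X). If T satisfies the Supercyclicity Criterion, i.e., there exist a strictly increasing sequence (n_k), dense subsets D_1, D_2 ⊆ X and maps S_{n_k} : D_2 → X with ‖T^{n_k} x‖·‖S_{n_k} y‖ → 0 for all x ∈ D_1, y ∈ D_2, and T^{n_k} S_{n_k} y → y for all y ∈ D_2, then T is supercyclic: there exists x ∈ X whose projective orbit {λ T^n x : n ≥ 0, λ ∈ 𝕂} is dense in X. -/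
open Filter

lemma aux_scale (a b : ℕ → ℝ) (ha : ∀ k, 0 ≤ a k) (hb : ∀ k, 0 ≤ b k)
    (hab : Tendsto (fun k => a k * b k) atTop (nhds 0)) :
    ∃ l : ℕ → ℝ, (∀ k, 0 < l k) ∧ Tendsto (fun k => a k / l k) atTop (nhds 0) ∧
      Tendsto (fun k => l k * b k) atTop (nhds 0) := by
  set ε : ℕ → ℝ := fun k => 1 / ((k + 1) * (b k + 1) ^ 2) with hε
  have hεpos : ∀ k, 0 < ε k := by
    intro k; have hbk := hb k; positivity
  have hεle : ∀ k, ε k ≤ 1 / (k + 1) := by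
    intro k
    rw [hε]
    have hbk := hb k
    have h1 : (1:ℝ) ≤ (b k + 1) ^ 2 := by nlinarith
    rw [div_le_div_iff₀ (by positivity) (by positivity)]
    nlinarith [mul_le_mul_of_nonneg_left h1 (show (0:ℝ) ≤ (k:ℝ) + 1 by positivity)]
  have hε0 : Tendsto ε atTop (nhds 0) :=
    squeeze_zero (fun k => (hεpos k).le) hεle tendsto_one_div_add_atTop_nhds_zero_nat
  have hs0 : Tendsto (fun k => Real.sqrt (a k * b k + ε k)) atTop (nhds 0) := by
    have h : Tendsto (fun k => a k * b k + ε k) atTop (nhds 0) := by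
      simpa using hab.add hε0
    simpa [Function.comp_def] using (Real.continuous_sqrt.tendsto 0).comp h
  have hspos : ∀ k, 0 < Real.sqrt (a k * b k + ε k) := by
    intro k
    exact Real.sqrt_pos.2 (by have := hεpos k; have := mul_nonneg (ha k) (hb k); linarith)
  have hnum : ∀ k, 0 < a k + ε k := fun k => by have := hεpos k; have := ha k; linarith
  refine ⟨fun k => (a k + ε k) / Real.sqrt (a k * b k + ε k), ?_, ?_, ?_⟩
  · intro k; exact div_pos (hnum k) (hspos k)
  · apply squeeze_zero (g := fun k => Real.sqrt (a k * b k + ε k)) ?_ ?_ hs0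
    · intro k; exact div_nonneg (ha k) (div_pos (hnum k) (hspos k)).le
    · intro k
      have h1 : a k / ((a k + ε k) / Real.sqrt (a k * b k + ε k))
          = a k * Real.sqrt (a k * b k + ε k) / (a k + ε k) := by
        field_simp
      rw [h1, div_le_iff₀ (hnum k)]
      have := (hspos k).le
      nlinarith [hεpos k, ha k]
  · have hinvs0 : Tendsto (fun k : ℕ => 1 / Real.sqrt (k + 1)) atTop (nhds 0) := by
      have h := (Real.continuous_sqrt.tendsto 0).comp tendsto_one_div_add_atTop_nhds_zero_nat
      rw [Real.sqrt_zero] at h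
      refine h.congr fun k => ?_
      simp [Function.comp, one_div, Real.sqrt_inv]
    apply squeeze_zero (g := fun k => Real.sqrt (a k * b k + ε k) + 1 / Real.sqrt (k + 1))
      (fun k => mul_nonneg (div_pos (hnum k) (hspos k)).le (hb k)) ?_ (by simpa using hs0.add hinvs0)
    intro k
    set s := Real.sqrt (a k * b k + ε k) with hsdef
    have hsp := hspos k
    have hss : s * s = a k * b k + ε k := Real.mul_self_sqrt
      (by have := hεpos k; have := mul_nonneg (ha k) (hb k); linarith)
    have h1 : (a k + ε k) / s * b k = (a k * b k) / s + ε k * b k / s := by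
      field_simp
    rw [h1]
    have h2 : a k * b k / s ≤ s := by
      rw [div_le_iff₀ hsp]
      nlinarith [hεpos k]
    have h3 : ε k * b k / s ≤ 1 / Real.sqrt (k + 1) := by
      have hsε : Real.sqrt (ε k) ≤ s := Real.sqrt_le_sqrt (by nlinarith [mul_nonneg (ha k) (hb k)])
      have hεsq : (0:ℝ) < Real.sqrt (ε k) := Real.sqrt_pos.2 (hεpos k)
      have step1 : ε k * b k / s ≤ ε k * b k / Real.sqrt (ε k) :=
        div_le_div_of_nonneg_left (mul_nonneg (hεpos k).le (hb k)) hεsq hsε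
      have step2 : ε k * b k / Real.sqrt (ε k) = Real.sqrt (ε k) * b k := by
        rw [mul_comm (ε k) (b k), mul_div_assoc, Real.div_sqrt, mul_comm]
      have hεeq : Real.sqrt (ε k) = (Real.sqrt (k + 1))⁻¹ * (b k + 1)⁻¹ := by
        rw [hε]
        simp only
        rw [one_div, Real.sqrt_inv, Real.sqrt_mul (by positivity),
          Real.sqrt_sq (by have := hb k; positivity), mul_inv]
      have step3 : Real.sqrt (ε k) * b k ≤ 1 / Real.sqrt (k + 1) := by
        rw [hεeq, one_div, mul_assoc]
        have hb1 : (b k + 1)⁻¹ * b k ≤ 1 := by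
          rw [inv_mul_le_iff₀ (by have := hb k; positivity)]
          have := hb k; linarith
        calc (Real.sqrt ((k:ℝ) + 1))⁻¹ * ((b k + 1)⁻¹ * b k)
            ≤ (Real.sqrt ((k:ℝ) + 1))⁻¹ * 1 := by
              apply mul_le_mul_of_nonneg_left hb1 (by positivity)
          _ = (Real.sqrt ((k:ℝ) + 1))⁻¹ := mul_one _
      linarith
    linarith

/-- The Supercyclicity Criterion implies supercyclicity: if there exist
a strictly increasing sequence `(n_k)`, dense sets `D_1, D_2` and maps
`S_{n_k} : D_2 → X` with `‖T^{n_k} x‖ ⬝ ‖S_{n_k} y‖ → 0` for `x ∈ D_1, y ∈ D_2` and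
`T^{n_k} S_{n_k} y → y`, then some `x` has dense projective orbit. -/
theorem stmt4 {𝕜 : Type*} [RCLike 𝕜] {X : Type*} [NormedAddCommGroup X]
    [NormedSpace 𝕜 X] [CompleteSpace X] [TopologicalSpace.SeparableSpace X]
    (T : X →L[𝕜] X)
    (nk : ℕ → ℕ) (hnk : StrictMono nk)
    (D₁ D₂ : Set X) (hD₁ : Dense D₁) (hD₂ : Dense D₂)
    (S : ℕ → X → X)
    (h1 : ∀ x ∈ D₁, ∀ y ∈ D₂,
      Tendsto (fun k : ℕ => ‖(T ^ nk k) x‖ * ‖S k y‖) atTop (nhds 0))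
    (h2 : ∀ y ∈ D₂, Tendsto (fun k : ℕ => (T ^ nk k) (S k y)) atTop (nhds y)) :
    ∃ x : X, Dense {z : X | ∃ (c : 𝕜) (m : ℕ), z = c • (T ^ m) x} := by
  obtain ⟨B, hBc, hBne, hBbasis⟩ := TopologicalSpace.exists_countable_basis X
  set G : Set X → Set X := fun V => {x | ∃ (c : 𝕜) (m : ℕ), c • (T ^ m) x ∈ V} with hG
  have hGopen : ∀ V, IsOpen V → IsOpen (G V) := by
    intro V hV
    have : G V = ⋃ (c : 𝕜), ⋃ (m : ℕ), (fun x => c • (T ^ m) x) ⁻¹' V := by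
      ext x; simp [hG]
    rw [this]
    exact isOpen_iUnion fun c => isOpen_iUnion fun m =>
      (hV.preimage ((T ^ m).continuous.const_smul c))
  have hGdense : ∀ V, IsOpen V → V.Nonempty → Dense (G V) := by
    intro V hV hVne
    rw [dense_iff_inter_open]
    intro U hU hUne
    obtain ⟨d₁, hd₁U, hd₁⟩ := hD₁.inter_open_nonempty U hU hUne
    obtain ⟨d₂, hd₂V, hd₂⟩ := hD₂.inter_open_nonempty V hV hVne
    obtain ⟨l, hlpos, hl1, hl2⟩ := aux_scale (fun k => ‖(T ^ nk k) d₁‖) (fun k => ‖S k d₂‖)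
      (fun k => norm_nonneg _) (fun k => norm_nonneg _) (h1 d₁ hd₁ d₂ hd₂)
    -- sequence in U
    have seq1 : Tendsto (fun k => d₁ + ((l k : ℝ) : 𝕜) • S k d₂) atTop (nhds d₁) := by
      have h0 : Tendsto (fun k => ((l k : ℝ) : 𝕜) • S k d₂) atTop (nhds 0) := by
        apply squeeze_zero_norm (a := fun k => l k * ‖S k d₂‖) _ hl2
        intro k
        rw [norm_smul, RCLike.norm_ofReal, abs_of_pos (hlpos k)]
      simpa using tendsto_const_nhds.add h0
    -- scaled image sequence tends to d₂
    have seq2 : Tendsto (fun k => (((l k)⁻¹ : ℝ) : 𝕜) • (T ^ nk k) (d₁ + ((l k : ℝ) : 𝕜) • S k d₂))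
        atTop (nhds d₂) := by
      have heq : ∀ k, (((l k)⁻¹ : ℝ) : 𝕜) • (T ^ nk k) (d₁ + ((l k : ℝ) : 𝕜) • S k d₂)
          = (((l k)⁻¹ : ℝ) : 𝕜) • (T ^ nk k) d₁ + (T ^ nk k) (S k d₂) := by
        intro k
        have hlk : ((l k : ℝ) : 𝕜) ≠ 0 := by
          simp only [ne_eq, RCLike.ofReal_eq_zero]
          exact (hlpos k).ne'
        rw [map_add, map_smul, smul_add, smul_smul, RCLike.ofReal_inv,
          inv_mul_cancel₀ hlk, one_smul]
      have hterm1 : Tendsto (fun k => (((l k)⁻¹ : ℝ) : 𝕜) • (T ^ nk k) d₁) atTop (nhds 0) := by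
        apply squeeze_zero_norm (a := fun k => ‖(T ^ nk k) d₁‖ / l k) _ hl1
        intro k
        show ‖(((l k)⁻¹ : ℝ) : 𝕜) • (T ^ nk k) d₁‖ ≤ ‖(T ^ nk k) d₁‖ / l k
        rw [norm_smul, RCLike.norm_ofReal, abs_of_pos (inv_pos.2 (hlpos k)),
          inv_mul_eq_div]
      have := hterm1.add (h2 d₂ hd₂)
      rw [zero_add] at this
      exact Tendsto.congr (fun k => (heq k).symm) this
    have ev1 := seq1.eventually_mem (hU.mem_nhds hd₁U)
    have ev2 := seq2.eventually_mem (hV.mem_nhds hd₂V)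
    obtain ⟨k, hk1, hk2⟩ := (ev1.and ev2).exists
    exact ⟨d₁ + ((l k : ℝ) : 𝕜) • S k d₂, hk1, ⟨(((l k)⁻¹ : ℝ) : 𝕜), nk k, hk2⟩⟩
  have hdense : Dense (⋂₀ (G '' B)) := by
    apply dense_sInter_of_isOpen
    · rintro s ⟨V, hV, rfl⟩
      exact hGopen V (hBbasis.isOpen hV)
    · exact hBc.image G
    · rintro s ⟨V, hV, rfl⟩
      refine hGdense V (hBbasis.isOpen hV) ?_
      rcases Set.eq_empty_or_nonempty V with h | h
      · exact absurd (h ▸ hV) hBne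
      · exact h
  obtain ⟨x, hx⟩ := hdense.nonempty
  refine ⟨x, (hBbasis.dense_iff).2 fun o ho hone => ?_⟩
  have hxo : x ∈ G o := hx (G o) ⟨o, ho, rfl⟩
  obtain ⟨c, m, hcm⟩ := hxo
  exact ⟨c • (T ^ m) x, hcm, c, m, rfl⟩
end

section
/- Let S = λ_1·Id ⊕ ⋯ ⊕ λ_n·Id ⊕ T on ℂ^n ⊕ X with λ_i ∈ ℂ*. If S is strongly n-supercyclic (some n-dimensional subspace M has all images S^k(M) of dimension n and ⋃_k S^k(M)^n dense in (ℂ^n ⊕ X)^n), then (T/λ_1) ⊕ ⋯ ⊕ (T/λ_n) is hypercyclic on X^n. -/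
open Filter Topology Metric

set_option maxHeartbeats 1000000 in
/-- Let `S = λ_1·Id ⊕ ⋯ ⊕ λ_n·Id ⊕ T` on `ℂ^n ⊕ X` with `λ_i ≠ 0`.
If `S` is strongly `n`-supercyclic (some `n`-dimensional subspace `M` with all
`S^k(M)` of dimension `n` and `⋃_k S^k(M)^n` dense in `(ℂ^n ⊕ X)^n`), then
`(T/λ_1) ⊕ ⋯ ⊕ (T/λ_n)` is hypercyclic on `X^n`. -/
theorem stmt6 {X : Type*} [NormedAddCommGroup X] [NormedSpace ℂ X]
    [CompleteSpace X] [TopologicalSpace.SeparableSpace X]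
    (n : ℕ) (lam : Fin n → ℂ) (hlam : ∀ i, lam i ≠ 0)
    (T : X →L[ℂ] X)
    (S : ((Fin n → ℂ) × X) →L[ℂ] ((Fin n → ℂ) × X))
    (hS : ∀ z : (Fin n → ℂ) × X, S z = (fun i => lam i * z.1 i, T z.2))
    (hsc : ∃ M : Submodule ℂ ((Fin n → ℂ) × X), Module.finrank ℂ M = n ∧
      (∀ k : ℕ, Module.finrank ℂ (Submodule.map ((S ^ k : ((Fin n → ℂ) × X) →L[ℂ] ((Fin n → ℂ) × X)) :
        ((Fin n → ℂ) × X) →ₗ[ℂ] ((Fin n → ℂ) × X)) M) = n) ∧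
      Dense {x : Fin n → ((Fin n → ℂ) × X) |
        ∃ k : ℕ, ∀ j, x j ∈ Submodule.map ((S ^ k : ((Fin n → ℂ) × X) →L[ℂ] ((Fin n → ℂ) × X)) :
          ((Fin n → ℂ) × X) →ₗ[ℂ] ((Fin n → ℂ) × X)) M}) :
    ∃ y : Fin n → X,
      Dense {w : Fin n → X | ∃ k : ℕ, w = fun i => ((lam i)⁻¹) ^ k • (T ^ k) (y i)} := by
  classical
  rcases Nat.eq_zero_or_pos n with hn | hn
  · subst hn
    refine ⟨fun i => i.elim0, ?_⟩
    have huniv : {w : Fin 0 → X | ∃ k : ℕ, w = fun i =>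
        ((lam i)⁻¹) ^ k • (T ^ k) ((fun i : Fin 0 => i.elim0) i)} = Set.univ := by
      ext w
      simp only [Set.mem_setOf_eq, Set.mem_univ, iff_true]
      exact ⟨0, funext fun i => i.elim0⟩
    rw [huniv]; exact dense_univ
  obtain ⟨M, hMrank, -, hdense⟩ := hsc
  -- powers of S act diagonally
  have hSpow : ∀ (k : ℕ) (z : (Fin n → ℂ) × X),
      (S ^ k) z = (fun i => (lam i) ^ k * z.1 i, (T ^ k) z.2) := by
    intro k
    induction k with
    | zero => intro z; simp
    | succ k ih =>
      intro z
      have h1 : (S ^ (k + 1)) z = (S ^ k) (S z) := by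
        rw [pow_succ]; rfl
      rw [h1, hS, ih]
      refine Prod.ext ?_ ?_
      · funext i
        show lam i ^ k * (lam i * z.1 i) = lam i ^ (k + 1) * z.1 i
        ring
      · show (T ^ k) (T z.2) = (T ^ (k + 1)) z.2
        rw [pow_succ]; rfl
  set fstL : ((Fin n → ℂ) × X) →ₗ[ℂ] (Fin n → ℂ) := LinearMap.fst ℂ _ _ with hfstL
  -- the projection of M onto ℂ^n is everything
  have hMtop : Submodule.map fstL M = ⊤ := by
    have hcont : Continuous fun x : Fin n → ((Fin n → ℂ) × X) =>
        Matrix.det (fun i j => (x j).1 i) := by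
      apply Continuous.matrix_det
      apply continuous_pi; intro i; apply continuous_pi; intro j
      exact (continuous_apply i).comp (continuous_fst.comp (continuous_apply j))
    have hUopen : IsOpen {x : Fin n → ((Fin n → ℂ) × X) |
        Matrix.det (fun i j => (x j).1 i) ≠ 0} := isOpen_ne.preimage hcont
    have hUne : {x : Fin n → ((Fin n → ℂ) × X) |
        Matrix.det (fun i j => (x j).1 i) ≠ 0}.Nonempty := by
      refine ⟨fun j => ((Pi.single j 1 : Fin n → ℂ), (0 : X)), ?_⟩
      have h1 : (fun i j => (((fun j => ((Pi.single j 1 : Fin n → ℂ), (0 : X))) j)).1 i)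
          = (1 : Matrix (Fin n) (Fin n) ℂ) := by
        ext i j; simp [Matrix.one_apply, Pi.single_apply, eq_comm]
      show Matrix.det _ ≠ 0
      rw [h1, Matrix.det_one]
      exact one_ne_zero
    obtain ⟨x, hxs, hxU⟩ := hdense.exists_mem_open hUopen hUne
    obtain ⟨k, hk⟩ := hxs
    set A : Matrix (Fin n) (Fin n) ℂ := fun i j => (x j).1 i with hA
    have hAdet : A.det ≠ 0 := hxU
    have hAunit : IsUnit A.det := isUnit_iff_ne_zero.mpr hAdet
    -- every z is in the projection of S^k M
    have hPtop : Submodule.map fstL (Submodule.map ((S ^ k : ((Fin n → ℂ) × X) →L[ℂ] ((Fin n → ℂ) × X)) : ((Fin n → ℂ) × X) →ₗ[ℂ] ((Fin n → ℂ) × X)) M) = ⊤ := by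
      rw [eq_top_iff]
      intro z _
      have h3 : ∀ c : Fin n → ℂ, A.mulVec c = ∑ j, c j • (x j).1 := by
        intro c
        funext i
        simp only [Matrix.mulVec, dotProduct, Finset.sum_apply, Pi.smul_apply,
          smul_eq_mul]
        exact Finset.sum_congr rfl fun j _ => mul_comm _ _
      have h2 : A.mulVec (A⁻¹.mulVec z) = z := by
        rw [Matrix.mulVec_mulVec, Matrix.mul_nonsing_inv _ hAunit, Matrix.one_mulVec]
      have hz : z = ∑ j, (A⁻¹.mulVec z) j • (x j).1 := by
        rw [← h3]; exact h2.symm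
      rw [hz]
      refine Submodule.sum_mem _ fun j _ => Submodule.smul_mem _ _ ?_
      exact ⟨x j, hk j, rfl⟩
    -- descend to M
    rw [eq_top_iff]
    intro w _
    have hw : (fun i => lam i ^ k * w i) ∈ Submodule.map fstL (Submodule.map ((S ^ k : ((Fin n → ℂ) × X) →L[ℂ] ((Fin n → ℂ) × X)) : ((Fin n → ℂ) × X) →ₗ[ℂ] ((Fin n → ℂ) × X)) M) := by
      rw [hPtop]; trivial
    obtain ⟨p, hpM, hp1⟩ := hw
    obtain ⟨q, hqM, hqp⟩ := hpM
    have hq1 : (fun i => lam i ^ k * q.1 i) = fun i => lam i ^ k * w i := by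
      rw [← hp1, ← hqp, ContinuousLinearMap.coe_coe, hSpow]
      rfl
    refine ⟨q, hqM, ?_⟩
    funext i
    have := congrFun hq1 i
    exact mul_left_cancel₀ (pow_ne_zero k (hlam i)) this
  -- M is the graph of a linear map determined by `y`
  have hMfin : FiniteDimensional ℂ M :=
    FiniteDimensional.of_finrank_pos (by rw [hMrank]; exact hn)
  have huniq : ∀ z : Fin n → ℂ, ∀ x1 x2 : X, ((z, x1) ∈ M) → ((z, x2) ∈ M) → x1 = x2 := by
    intro z x1 x2 h1 h2
    set f : M →ₗ[ℂ] (Fin n → ℂ) := fstL.comp M.subtype with hf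
    have hrange : LinearMap.range f = Submodule.map fstL M := by
      rw [hf, LinearMap.range_comp, Submodule.range_subtype]
    have hker : LinearMap.ker f = ⊥ := by
      have h3 := f.finrank_range_add_finrank_ker
      rw [hrange, hMtop] at h3
      rw [finrank_top, Module.finrank_fin_fun, hMrank] at h3
      have h4 : Module.finrank ℂ (LinearMap.ker f) = 0 := by omega
      exact Submodule.finrank_eq_zero.mp h4
    have hmem : (⟨(z, x1) - (z, x2), M.sub_mem h1 h2⟩ : M) ∈ LinearMap.ker f := by
      simp [hf, hfstL]
    rw [hker, Submodule.mem_bot] at hmem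
    have h5 : (z, x1) - (z, x2) = 0 := congrArg Subtype.val hmem
    have h6 := congrArg Prod.snd h5
    simpa [sub_eq_zero] using h6
  have hy : ∀ i : Fin n, ∃ x : X, ((Pi.single i 1 : Fin n → ℂ), x) ∈ M := by
    intro i
    have hmem : (Pi.single i 1 : Fin n → ℂ) ∈ Submodule.map fstL M := by rw [hMtop]; trivial
    obtain ⟨p, hp, hp1⟩ := hmem
    refine ⟨p.2, ?_⟩
    have : ((Pi.single i 1 : Fin n → ℂ), p.2) = p := Prod.ext hp1.symm rfl
    rwa [this]
  choose y hyM using hy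
  have hrep : ∀ z x, ((z, x) ∈ M) → x = ∑ i, z i • y i := by
    intro z x hzx
    have hmem : ((z, ∑ i, z i • y i) : (Fin n → ℂ) × X) ∈ M := by
      have heq : ((z, ∑ i, z i • y i) : (Fin n → ℂ) × X)
          = ∑ i, z i • ((Pi.single i 1 : Fin n → ℂ), y i) := by
        refine Prod.ext ?_ ?_
        · rw [Prod.fst_sum]
          funext j
          simp [Pi.single_apply, mul_ite, Finset.sum_ite_eq]
        · rw [Prod.snd_sum]; simp
      rw [heq]
      exact Submodule.sum_mem _ fun i _ => M.smul_mem _ (hyM i)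
    exact huniq z x _ hzx hmem
  -- the main density argument
  refine ⟨y, ?_⟩
  intro u
  rw [mem_closure_iff_seq_limit]
  have key : ∀ δ : ℝ, 0 < δ → ∃ (k : ℕ) (c : Matrix (Fin n) (Fin n) ℂ),
      (∀ j i, ‖c j i - (1 : Matrix (Fin n) (Fin n) ℂ) j i‖ < δ) ∧
      (∀ j, ‖(∑ i, c j i • (((lam i)⁻¹) ^ k • (T ^ k) (y i))) - u j‖ < δ) := by
    intro δ hδ
    have hO : IsOpen {x : Fin n → ((Fin n → ℂ) × X) |
        ∀ j, (x j).1 ∈ Metric.ball (Pi.single j 1 : Fin n → ℂ) δ ∧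
          (x j).2 ∈ Metric.ball (u j) δ} := by
      have heq : {x : Fin n → ((Fin n → ℂ) × X) |
          ∀ j, (x j).1 ∈ Metric.ball (Pi.single j 1 : Fin n → ℂ) δ ∧
            (x j).2 ∈ Metric.ball (u j) δ}
          = ⋂ j, ((fun x : Fin n → ((Fin n → ℂ) × X) => (x j).1) ⁻¹'
              Metric.ball (Pi.single j 1 : Fin n → ℂ) δ) ∩
            ((fun x : Fin n → ((Fin n → ℂ) × X) => (x j).2) ⁻¹'
              Metric.ball (u j) δ) := by
        ext x; simp [Set.mem_iInter]
      rw [heq]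
      refine isOpen_iInter_of_finite fun j => IsOpen.inter ?_ ?_
      · exact Metric.isOpen_ball.preimage (continuous_fst.comp (continuous_apply j))
      · exact Metric.isOpen_ball.preimage (continuous_snd.comp (continuous_apply j))
    have hOne : {x : Fin n → ((Fin n → ℂ) × X) |
        ∀ j, (x j).1 ∈ Metric.ball (Pi.single j 1 : Fin n → ℂ) δ ∧
          (x j).2 ∈ Metric.ball (u j) δ}.Nonempty :=
      ⟨fun j => ((Pi.single j 1 : Fin n → ℂ), u j),
        fun j => ⟨Metric.mem_ball_self hδ, Metric.mem_ball_self hδ⟩⟩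
    obtain ⟨q, hqs, hqb⟩ := hdense.exists_mem_open hO hOne
    obtain ⟨k, hk⟩ := hqs
    choose mz hmzM hmzq using hk
    refine ⟨k, fun j i => lam i ^ k * (mz j).1 i, ?_, ?_⟩
    · intro j i
      have h2 : dist (q j).1 (Pi.single j 1 : Fin n → ℂ) < δ := (hqb j).1
      have h3 : dist ((q j).1 i) ((Pi.single j 1 : Fin n → ℂ) i) < δ :=
        lt_of_le_of_lt (dist_le_pi_dist _ _ i) h2
      have h4 : (q j).1 i = lam i ^ k * (mz j).1 i := by
        rw [← hmzq j, ContinuousLinearMap.coe_coe, hSpow]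
      have h5 : ((Pi.single j 1 : Fin n → ℂ) i) = (1 : Matrix (Fin n) (Fin n) ℂ) j i := by
        simp [Matrix.one_apply, Pi.single_apply, eq_comm]
      show ‖lam i ^ k * (mz j).1 i - (1 : Matrix (Fin n) (Fin n) ℂ) j i‖ < δ
      rw [← h4, ← h5]
      rwa [dist_eq_norm] at h3
    · intro j
      have h2 : dist (q j).2 (u j) < δ := (hqb j).2
      have h4 : (q j).2 = ∑ i, (lam i ^ k * (mz j).1 i) • (((lam i)⁻¹) ^ k • (T ^ k) (y i)) := by
        have h5 : (q j).2 = (T ^ k) ((mz j).2) := by rw [← hmzq j, ContinuousLinearMap.coe_coe, hSpow]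
        have h6 : (mz j).2 = ∑ i, (mz j).1 i • y i := hrep _ _ (hmzM j)
        rw [h5, h6, map_sum]
        refine Finset.sum_congr rfl fun i _ => ?_
        rw [map_smul, smul_smul]
        congr 1
        rw [mul_comm (lam i ^ k), mul_assoc, ← mul_pow,
          mul_inv_cancel₀ (hlam i), one_pow, mul_one]
      rw [← h4]
      rwa [dist_eq_norm] at h2
  have keyseq : ∀ m : ℕ, ∃ (k : ℕ) (c : Matrix (Fin n) (Fin n) ℂ),
      (∀ j i, ‖c j i - (1 : Matrix (Fin n) (Fin n) ℂ) j i‖ < ((m : ℝ) + 1)⁻¹) ∧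
      (∀ j, ‖(∑ i, c j i • (((lam i)⁻¹) ^ k • (T ^ k) (y i))) - u j‖ < ((m : ℝ) + 1)⁻¹) :=
    fun m => key _ (by positivity)
  choose K C hC hCu using keyseq
  set V : ℕ → Fin n → X := fun m i => ((lam i)⁻¹) ^ (K m) • (T ^ (K m)) (y i) with hV
  refine ⟨V, fun m => ⟨K m, rfl⟩, ?_⟩
  rw [tendsto_pi_nhds]
  intro i
  have hδ0 : Tendsto (fun m : ℕ => ((m : ℝ) + 1)⁻¹) atTop (𝓝 0) := by
    simpa [one_div] using (tendsto_one_div_add_atTop_nhds_zero_nat :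
      Tendsto (fun n : ℕ => 1 / ((n : ℝ) + 1)) atTop (𝓝 0))
  have hCtend : Tendsto C atTop (𝓝 (1 : Matrix (Fin n) (Fin n) ℂ)) := by
    refine tendsto_pi_nhds.mpr fun a => ?_
    refine tendsto_pi_nhds.mpr fun b => ?_
    rw [tendsto_iff_norm_sub_tendsto_zero]
    exact squeeze_zero (fun m => norm_nonneg _) (fun m => le_of_lt (hC m a b)) hδ0
  have hdet : Tendsto (fun m => (C m).det) atTop (𝓝 1) := by
    have h1 := (Continuous.matrix_det (continuous_id)).tendsto (1 : Matrix (Fin n) (Fin n) ℂ)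
    simpa [Function.comp_def] using h1.comp hCtend
  have hadj : Tendsto (fun m => (C m).adjugate) atTop (𝓝 (1 : Matrix (Fin n) (Fin n) ℂ)) := by
    have h1 := (Continuous.matrix_adjugate (continuous_id)).tendsto (1 : Matrix (Fin n) (Fin n) ℂ)
    simpa [Matrix.adjugate_one, Function.comp_def] using h1.comp hCtend
  set B : ℕ → Matrix (Fin n) (Fin n) ℂ := fun m => ((C m).det)⁻¹ • (C m).adjugate with hB
  have hBtend : Tendsto B atTop (𝓝 (1 : Matrix (Fin n) (Fin n) ℂ)) := by
    have h1 := (hdet.inv₀ one_ne_zero).smul hadj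
    simpa using h1
  have hBij : ∀ a b, Tendsto (fun m => B m a b) atTop
      (𝓝 ((1 : Matrix (Fin n) (Fin n) ℂ) a b)) := by
    intro a b
    exact tendsto_pi_nhds.mp (tendsto_pi_nhds.mp hBtend a) b
  have hW : ∀ j, Tendsto (fun m => ∑ i', C m j i' • V m i') atTop (𝓝 (u j)) := by
    intro j
    rw [tendsto_iff_norm_sub_tendsto_zero]
    exact squeeze_zero (fun m => norm_nonneg _) (fun m => le_of_lt (hCu m j)) hδ0
  have hdetne : ∀ᶠ m in atTop, (C m).det ≠ 0 := hdet.eventually_ne one_ne_zero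
  have hVeq : ∀ m, (C m).det ≠ 0 →
      (∑ j, B m i j • (∑ i', C m j i' • V m i')) = V m i := by
    intro m hm
    have h1 : (∑ j, B m i j • (∑ i', C m j i' • V m i'))
        = ∑ i', ((B m * C m) i i') • V m i' := by
      simp_rw [Finset.smul_sum, smul_smul]
      rw [Finset.sum_comm]
      refine Finset.sum_congr rfl fun i' _ => ?_
      rw [Matrix.mul_apply, Finset.sum_smul]
    have h2 : B m * C m = 1 := by
      rw [hB]
      rw [Matrix.smul_mul, Matrix.adjugate_mul, smul_smul, inv_mul_cancel₀ hm, one_smul]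
    rw [h1, h2]
    simp [Matrix.one_apply, ite_smul, Finset.sum_ite_eq]
  have hlim : Tendsto (fun m => ∑ j, B m i j • (∑ i', C m j i' • V m i')) atTop (𝓝 (u i)) := by
    have h1 : Tendsto (fun m => ∑ j, B m i j • (∑ i', C m j i' • V m i')) atTop
        (𝓝 (∑ j, (1 : Matrix (Fin n) (Fin n) ℂ) i j • u j)) :=
      tendsto_finset_sum _ fun j _ => (hBij i j).smul (hW j)
    simpa [Matrix.one_apply, ite_smul, Finset.sum_ite_eq] using h1
  refine hlim.congr' ?_
  filter_upwards [hdetne] with m hm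
  exact hVeq m hm
end

section
/- Let T be a strongly 2-supercyclic operator on a complex Banach space X of the form T = a·Id ⊕ S on ℂ ⊕ X_0, where a ∈ ℂ*. Then S is supercyclic on X_0. -/
set_option synthInstance.maxHeartbeats 1000000 in
set_option maxHeartbeats 1000000 in
/-- If `T = a·Id ⊕ S` on `ℂ ⊕ X₀` (`a ≠ 0`) is strongly
2-supercyclic, then `S` is supercyclic on `X₀`. -/
theorem stmt10 {X₀ : Type*} [NormedAddCommGroup X₀] [NormedSpace ℂ X₀]
    [CompleteSpace X₀] [TopologicalSpace.SeparableSpace X₀]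
    (a : ℂ) (ha : a ≠ 0) (S : X₀ →L[ℂ] X₀)
    (T : (ℂ × X₀) →L[ℂ] (ℂ × X₀))
    (hT : ∀ z : ℂ × X₀, T z = (a * z.1, S z.2))
    (hsc : ∃ L : Submodule ℂ (ℂ × X₀), Module.finrank ℂ L = 2 ∧
      (∀ k : ℕ, Module.finrank ℂ (Submodule.map ((T ^ k : (ℂ × X₀) →L[ℂ] (ℂ × X₀)) : (ℂ × X₀) →ₗ[ℂ] (ℂ × X₀)) L) = 2) ∧
      Dense {x : Fin 2 → ℂ × X₀ | ∃ k : ℕ, ∀ j, x j ∈ Submodule.map ((T ^ k : (ℂ × X₀) →L[ℂ] (ℂ × X₀)) : (ℂ × X₀) →ₗ[ℂ] (ℂ × X₀)) L}) :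
    ∃ y : X₀, Dense {z : X₀ | ∃ (c : ℂ) (k : ℕ), z = c • (S ^ k) y} := by
  obtain ⟨L, hL2, hLk, hdense⟩ := hsc
  -- the key description of the powers of T
  have hTk : ∀ (k : ℕ) (z : ℂ × X₀), (T ^ k) z = (a ^ k * z.1, (S ^ k) z.2) := by
    intro k
    induction k with
    | zero => intro z; simp
    | succ n ih =>
      intro z
      have h1 : (T ^ (n + 1)) z = (T ^ n) (T z) := by
        rw [pow_succ, ContinuousLinearMap.mul_apply]
      have h2 : (S ^ (n + 1)) z.2 = (S ^ n) (S z.2) := by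
        rw [pow_succ, ContinuousLinearMap.mul_apply]
      rw [h1, ih (T z), hT z, h2]
      simp only [Prod.mk.injEq]
      exact ⟨by ring, trivial⟩
  -- there is an element of L with nonzero first coordinate
  have hex : ∃ m ∈ L, (m : ℂ × X₀).1 ≠ 0 := by
    by_contra hno
    push_neg at hno
    obtain ⟨x, hxb, hxs⟩ :=
      (Metric.dense_iff.mp hdense) (fun _ => ((1 : ℂ), (0 : X₀))) 1 one_pos
    obtain ⟨k, hk⟩ := hxs
    obtain ⟨m, hmL, hm⟩ := hk 0
    have h0 : (x 0).1 = 0 := by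
      rw [← hm, ContinuousLinearMap.coe_coe, hTk k m, hno m hmL]
      simp
    have hd1 : dist (x 0) ((1 : ℂ), (0 : X₀)) < 1 := by
      have h := dist_le_pi_dist x (fun _ => ((1 : ℂ), (0 : X₀))) 0
      exact lt_of_le_of_lt h (Metric.mem_ball.mp hxb)
    have hd2 : dist (x 0).1 (1 : ℂ) < 1 :=
      lt_of_le_of_lt (by rw [Prod.dist_eq]; exact le_max_left _ _) hd1
    rw [h0] at hd2
    simp at hd2
  obtain ⟨u, huL, hu1⟩ := hex
  -- finite dimensionality of L
  have : Module.Finite ℂ L := Module.finite_of_finrank_eq_succ hL2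
  -- first-coordinate functional on L
  set f : L →ₗ[ℂ] ℂ := (LinearMap.fst ℂ ℂ X₀) ∘ₗ L.subtype with hf
  have hfu : f ⟨u, huL⟩ = u.1 := rfl
  have hrange : LinearMap.range f = ⊤ := by
    rcases eq_bot_or_eq_top (LinearMap.range f) with h | h
    · exfalso
      apply hu1
      have hmem : f ⟨u, huL⟩ ∈ LinearMap.range f := LinearMap.mem_range_self f _
      rw [h] at hmem
      simpa [hfu] using hmem
    · exact h
  have hker1 : Module.finrank ℂ (LinearMap.ker f) = 1 := by
    have hrn := LinearMap.finrank_range_add_finrank_ker f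
    rw [hrange, hL2] at hrn
    have h1 : Module.finrank ℂ (⊤ : Submodule ℂ ℂ) = 1 := by
      simp [finrank_top]
    omega
  have hfree : Module.Free ℂ (LinearMap.ker f) := Module.Free.of_divisionRing ℂ (LinearMap.ker f)
  obtain ⟨v0, hv0ne, hv0⟩ := (finrank_eq_one_iff' (K := ℂ) (V := LinearMap.ker f)).mp hker1
  set w : ℂ × X₀ := ((v0 : L) : ℂ × X₀) with hwdef
  have hw1 : w.1 = 0 := by
    have hv : f (v0 : L) = 0 := LinearMap.mem_ker.mp v0.2
    exact hv
  refine ⟨w.2, ?_⟩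
  -- decomposition of elements of (T^k) L
  have hdecomp : ∀ (k : ℕ), ∀ p ∈ Submodule.map ((T ^ k : (ℂ × X₀) →L[ℂ] (ℂ × X₀)) : (ℂ × X₀) →ₗ[ℂ] (ℂ × X₀)) L,
      ∃ α γ : ℂ, p.1 = a ^ k * (α * u.1) ∧
        p.2 = α • (S ^ k) u.2 + γ • (S ^ k) w.2 := by
    intro k p hp
    obtain ⟨m, hmL, hm⟩ := hp
    set α : ℂ := m.1 / u.1 with hα
    have hrL : m - α • u ∈ L := L.sub_mem hmL (L.smul_mem α huL)
    have hrker : (⟨m - α • u, hrL⟩ : L) ∈ LinearMap.ker f := by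
      have hr1 : (m - α • u).1 = 0 := by
        simp only [Prod.fst_sub, Prod.smul_fst, smul_eq_mul, hα]
        field_simp
        ring
      simpa [hf, LinearMap.mem_ker] using hr1
    obtain ⟨γ, hγ⟩ := hv0 ⟨(⟨m - α • u, hrL⟩ : L), hrker⟩
    have hγ' : m - α • u = γ • w := by
      have hc := congrArg (fun z : LinearMap.ker f => ((z : L) : ℂ × X₀)) hγ
      simpa [hwdef] using hc.symm
    have hm1 : m.1 = α * u.1 := by
      have hc := congrArg Prod.fst hγ'
      simp only [Prod.fst_sub, Prod.smul_fst, smul_eq_mul, hw1, mul_zero] at hc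
      linear_combination hc
    have hm2 : m.2 = α • u.2 + γ • w.2 := by
      have hc := congrArg Prod.snd hγ'
      simp only [Prod.snd_sub, Prod.smul_snd] at hc
      rw [← hc]; abel
    refine ⟨α, γ, ?_, ?_⟩
    · rw [← hm, ContinuousLinearMap.coe_coe, hTk k m]; simp [hm1]
    · rw [← hm, ContinuousLinearMap.coe_coe, hTk k m]
      simp only [hm2, map_add, map_smul]
  -- main density argument
  rw [Metric.dense_iff]
  intro t r hr
  have hu1n : (0 : ℝ) < ‖u.1‖ := norm_pos_iff.mpr hu1
  set δ : ℝ := min (r / 2) (‖u.1‖ / 2) with hδdef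
  have hδ : 0 < δ := lt_min (by linarith) (by linarith)
  have hδr : δ ≤ r / 2 := min_le_left _ _
  have hδu : δ ≤ ‖u.1‖ / 2 := min_le_right _ _
  obtain ⟨x, hxb, hxs⟩ :=
    (Metric.dense_iff.mp hdense) ![((0 : ℂ), t), (u.1, (0 : X₀))] δ hδ
  obtain ⟨k, hk⟩ := hxs
  have hxd : dist x ![((0 : ℂ), t), (u.1, (0 : X₀))] < δ := Metric.mem_ball.mp hxb
  set p : ℂ × X₀ := x 0 with hpdef
  set q : ℂ × X₀ := x 1 with hqdef
  have hdp : dist p ((0 : ℂ), t) < δ := by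
    have h := dist_le_pi_dist x ![((0 : ℂ), t), (u.1, (0 : X₀))] 0
    simp only [Matrix.cons_val_zero] at h
    exact lt_of_le_of_lt h hxd
  have hdq : dist q (u.1, (0 : X₀)) < δ := by
    have h := dist_le_pi_dist x ![((0 : ℂ), t), (u.1, (0 : X₀))] 1
    simp only [Matrix.cons_val_one, Matrix.head_cons] at h
    exact lt_of_le_of_lt h hxd
  have hp1 : ‖p.1‖ < δ := by
    have h : dist p.1 (0 : ℂ) ≤ dist p ((0 : ℂ), t) := by
      rw [Prod.dist_eq]; exact le_max_left _ _
    rw [dist_zero_right] at h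
    exact lt_of_le_of_lt h hdp
  have hp2 : dist p.2 t < δ := by
    have h : dist p.2 t ≤ dist p ((0 : ℂ), t) := by
      rw [Prod.dist_eq]; exact le_max_right _ _
    exact lt_of_le_of_lt h hdp
  have hq1 : dist q.1 u.1 < δ := by
    have h : dist q.1 u.1 ≤ dist q (u.1, (0 : X₀)) := by
      rw [Prod.dist_eq]; exact le_max_left _ _
    exact lt_of_le_of_lt h hdq
  have hq2 : ‖q.2‖ < δ := by
    have h : dist q.2 (0 : X₀) ≤ dist q (u.1, (0 : X₀)) := by
      rw [Prod.dist_eq]; exact le_max_right _ _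
    rw [dist_zero_right] at h
    exact lt_of_le_of_lt h hdq
  obtain ⟨α, γ, hpa, hpb⟩ := hdecomp k p (hk 0)
  obtain ⟨α', γ', hqa, hqb⟩ := hdecomp k q (hk 1)
  -- q.1 is bounded away from 0
  have hQ : ‖u.1‖ / 2 ≤ ‖q.1‖ := by
    have h := abs_norm_sub_norm_le q.1 u.1
    rw [← dist_eq_norm] at h
    have h2 := abs_le.mp h
    linarith [h2.1, hq1]
  have hq1ne : q.1 ≠ 0 := by
    intro h
    rw [h, norm_zero] at hQ
    linarith
  have hakne : (a : ℂ) ^ k ≠ 0 := pow_ne_zero k ha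
  have hα'ne : α' ≠ 0 := by
    intro h
    apply hq1ne
    rw [hqa, h, zero_mul, mul_zero]
  set ρ : ℂ := p.1 / q.1 with hρdef
  set c : ℂ := γ - ρ * γ' with hcdef
  have hρ : ρ = α / α' := by
    rw [hρdef, hpa, hqa]
    field_simp
  -- key identity
  have hkey : p.2 - ρ • q.2 = c • (S ^ k) w.2 := by
    rw [hpb, hqb, hρ, hcdef, hρ]
    match_scalars
    all_goals (field_simp; try ring)
  have hρn : ‖ρ‖ ≤ 1 := by
    rw [hρdef, norm_div]
    apply div_le_one_of_le₀
    · linarith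
    · exact norm_nonneg _
  have hest : dist (c • (S ^ k) w.2) t < r := by
    have he : t - c • (S ^ k) w.2 = (t - p.2) + ρ • q.2 := by
      rw [← hkey]; abel
    have hn : ‖t - c • (S ^ k) w.2‖ ≤ ‖t - p.2‖ + ‖ρ‖ * ‖q.2‖ := by
      rw [he]
      exact le_trans (norm_add_le _ _) (by rw [norm_smul])
    have h1 : ‖t - p.2‖ < δ := by rw [← dist_eq_norm, dist_comm]; exact hp2
    have h2 : ‖ρ‖ * ‖q.2‖ ≤ ‖q.2‖ :=
      mul_le_of_le_one_left (norm_nonneg _) hρn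
    rw [dist_eq_norm, ← norm_neg]
    have : -(c • (S ^ k) w.2 - t) = t - c • (S ^ k) w.2 := by abel
    rw [this]
    calc ‖t - c • (S ^ k) w.2‖ ≤ ‖t - p.2‖ + ‖ρ‖ * ‖q.2‖ := hn
      _ < δ + δ := by linarith
      _ ≤ r := by linarith
  exact ⟨c • (S ^ k) w.2, Metric.mem_ball.mpr hest, ⟨c, k, rfl⟩⟩
end
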